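/- arXiv:0909.5677 — 2 statements merged into one kernel-verified Lean document; each statement's English description precedes it below -/
import Mathlib

section
/- Let A be a monotone, single-minded-decisive allocation rule and let M_A charge critical prices. Fix an agent i with true valuation t_i, a set S ⊆ M, and a profile d_{-i} of single-minded declarations of the other agents. Then for every x ≥ 0, the utility of agent i from the truthful single-minded declaration (S, t_i(S)) is at least its utility from the single-minded declaration (S, x): u_i((S, t_i(S)), d_{-i}) ≥ u_i((S, x), d_{-i}). -/
open Finset

variable {α : Type*} [DecidableEq α] [Fintype α] {n : ℕ}

/-- The single-minded declaration for the set `S` at value `x`: it assigns `x` to every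
superset of `S` (when `S` is nonempty) and `0` to every other set.  For `S = ∅` it is
the zero declaration. -/
def singleMinded (S : Finset α) (x : ℝ) : Finset α → ℝ :=
  fun T => if S ⊆ T ∧ S.Nonempty then x else 0

/-- A valuation: nonnegative, monotone and normalized. -/
def IsValuation (t : Finset α → ℝ) : Prop :=
  (∀ S, 0 ≤ t S) ∧ (∀ S T : Finset α, S ⊆ T → t S ≤ t T) ∧ t ∅ = 0

/-- A single-minded declaration at a nonnegative value. -/
def IsSingleMindedDecl (d : Finset α → ℝ) : Prop :=
  ∃ (S : Finset α) (x : ℝ), 0 ≤ x ∧ d = singleMinded S x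

/-- `A` is single-minded-decisive: on a profile of single-minded declarations it allocates to
each agent either its demanded set or `∅`. -/
def Decisive (A : (Fin n → Finset α → ℝ) → Fin n → Finset α) : Prop :=
  ∀ (d : Fin n → Finset α → ℝ) (S : Fin n → Finset α) (x : Fin n → ℝ),
    (∀ i, 0 ≤ x i ∧ d i = singleMinded (S i) (x i)) →
    ∀ i, A d i = S i ∨ A d i = ∅

/-- Monotonicity of an allocation rule. -/
def MonotoneAlloc (A : (Fin n → Finset α → ℝ) → Fin n → Finset α) : Prop :=
  ∀ (d : Fin n → Finset α → ℝ) (i : Fin n) (S S' : Finset α) (x x' : ℝ),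
    0 ≤ x → x ≤ x' → S' ⊆ S →
    A (Function.update d i (singleMinded S x)) i = S →
    A (Function.update d i (singleMinded S' x')) i = S'

/-- Loser-independence of an allocation rule. -/
def LoserIndependent (A : (Fin n → Finset α → ℝ) → Fin n → Finset α) : Prop :=
  ∀ (d d' : Fin n → Finset α → ℝ) (i : Fin n),
    A (Function.update d i 0) = A (Function.update d' i 0) →
    (∀ j, j ≠ i →
      d j (A (Function.update d i 0) j) = d' j (A (Function.update d' i 0) j)) →
    ∀ e : Finset α → ℝ, A (Function.update d i e) = A (Function.update d' i e)

/-- `A` is a `c`-approximation with respect to the feasibility constraint `F`. -/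
def CApprox (F : Set (Fin n → Finset α)) (c : ℝ)
    (A : (Fin n → Finset α → ℝ) → Fin n → Finset α) : Prop :=
  ∀ d : Fin n → Finset α → ℝ, (∀ j, IsValuation (d j)) →
    ∀ X ∈ F, (1 / c) * ∑ i, d i (X i) ≤ ∑ i, d i (A d i)

/-- The critical price `θ_i^A(S, d_{-i})`. -/
noncomputable def critPrice (A : (Fin n → Finset α → ℝ) → Fin n → Finset α)
    (i : Fin n) (S : Finset α) (d : Fin n → Finset α → ℝ) : ℝ :=
  sInf {x : ℝ | 0 ≤ x ∧ A (Function.update d i (singleMinded S x)) i = S}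

/-- The utility of agent `i` with true valuation `ti` in the mechanism `M_A`
(which charges critical prices) on the declaration profile `d`. -/
noncomputable def utility (A : (Fin n → Finset α → ℝ) → Fin n → Finset α)
    (ti : Finset α → ℝ) (i : Fin n) (d : Fin n → Finset α → ℝ) : ℝ :=
  if A d i = ∅ then 0 else ti (A d i) - critPrice A i (A d i) d

/-- Lemma 3.1 ('if' direction): in `M_A`, the truthful single-minded declaration `(S, t S)`
yields at least the utility of any single-minded declaration `(S, x)`, against any profile of
single-minded declarations of the other agents. -/
theorem stmt0 (A : (Fin n → Finset α → ℝ) → Fin n → Finset α)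
    (hmono : MonotoneAlloc A) (hdec : Decisive A)
    (i : Fin n) (t : Finset α → ℝ) (ht : IsValuation t) (S : Finset α)
    (d : Fin n → Finset α → ℝ) (hd : ∀ j, j ≠ i → IsSingleMindedDecl (d j))
    (x : ℝ) (hx : 0 ≤ x) :
    utility A t i (Function.update d i (singleMinded S (t S))) ≥
      utility A t i (Function.update d i (singleMinded S x)) := by

  classical
  obtain ⟨h0, hmonot, hz⟩ := ht
  set dX := Function.update d i (singleMinded S x) with hdX
  set dT := Function.update d i (singleMinded S (t S)) with hdT
  have hdec' : ∀ e : ℝ, 0 ≤ e →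
      A (Function.update d i (singleMinded S e)) i = S ∨
      A (Function.update d i (singleMinded S e)) i = ∅ := by
    intro e he
    have hall : ∀ j : Fin n, ∃ (Sj : Finset α) (xj : ℝ), 0 ≤ xj ∧
        (j ≠ i → d j = singleMinded Sj xj) := fun j => by
      by_cases hj : j = i
      · exact ⟨∅, 0, le_refl 0, fun h => absurd hj h⟩
      · obtain ⟨Sj, xj, h1, h2⟩ := hd j hj; exact ⟨Sj, xj, h1, fun _ => h2⟩
    choose Sv xv hxv hdv using hall
    have := hdec (Function.update d i (singleMinded S e))
      (Function.update Sv i S) (Function.update xv i e)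
      (fun j => by
        by_cases hj : j = i
        · subst hj; simp [he]
        · simp [Function.update_of_ne hj, hxv j, hdv j hj]) i
    simpa using this
  set θset : Set ℝ := {y | 0 ≤ y ∧ A (Function.update d i (singleMinded S y)) i = S}
    with hθ
  have hbdd : BddBelow θset := ⟨0, fun y hy => hy.1⟩
  have hcrit : ∀ e : ℝ, critPrice A i S (Function.update d i (singleMinded S e)) = sInf θset := by
    intro e
    unfold critPrice
    congr 1
    ext y
    simp [hθ, Function.update_idem]
  simp only [utility]
  by_cases hX : A dX i = ∅
  · rw [if_pos hX]
    by_cases hT : A dT i = ∅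
    · rw [if_pos hT]
    · have hTS : A dT i = S := (hdec' (t S) (h0 S)).resolve_right hT
      rw [if_neg hT, hTS, hdT, hcrit]
      have hmem : t S ∈ θset := ⟨h0 S, hTS⟩
      have := csInf_le hbdd hmem
      linarith
  · have hXS : A dX i = S := (hdec' x hx).resolve_right hX
    have hSne : S ≠ ∅ := fun h => hX (h ▸ hXS)
    rw [if_neg hX, hXS, hdX, hcrit]
    have hne : θset.Nonempty := ⟨x, hx, hXS⟩
    by_cases hT : A dT i = ∅
    · rw [if_pos hT]
      have hle : t S ≤ sInf θset := by
        by_contra h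
        push_neg at h
        obtain ⟨y, hy, hyt⟩ := exists_lt_of_csInf_lt hne h
        have hres := hmono d i S S y (t S) hy.1 hyt.le (subset_refl S) hy.2
        exact hSne (hres.symm.trans hT)
      linarith
    · have hTS : A dT i = S := (hdec' (t S) (h0 S)).resolve_right hT
      rw [if_neg hT, hTS, hdT, hcrit]
end

section
/- Let A be a monotone, single-minded-decisive allocation rule and let M_A charge critical prices. Fix an agent i with true valuation t_i and a set S ⊆ M. Suppose x ≥ 0 satisfies x ≠ t_i(S) and there exists a profile d*_{-i} of single-minded declarations of the other agents such that the critical price θ_i^A(S, d*_{-i}) lies strictly between x and t_i(S). Then the single-minded declaration (S, x) is weakly dominated by the truthful single-minded declaration (S, t_i(S)): for every single-minded profile d_{-i}, u_i((S, t_i(S)), d_{-i}) ≥ u_i((S, x), d_{-i}), and u_i((S, t_i(S)), d*_{-i}) > u_i((S, x), d*_{-i}). -/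
open Finset

variable {α : Type*} [DecidableEq α] [Fintype α] {n : ℕ}

/-- Lemma 3.1 ('only if' direction): if `x ≠ t S` and there is a single-minded profile
`d*_{-i}` whose critical price for `S` lies strictly between `x` and `t S`, then the
single-minded declaration `(S, x)` is weakly dominated by the truthful declaration
`(S, t S)`. -/
theorem stmt1 (A : (Fin n → Finset α → ℝ) → Fin n → Finset α)
    (hmono : MonotoneAlloc A) (hdec : Decisive A)
    (i : Fin n) (t : Finset α → ℝ) (ht : IsValuation t) (S : Finset α)
    (x : ℝ) (hx : 0 ≤ x) (hne : x ≠ t S)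
    (dstar : Fin n → Finset α → ℝ)
    (hdstar : ∀ j, j ≠ i → IsSingleMindedDecl (dstar j))
    (hbetween : min x (t S) < critPrice A i S dstar ∧
      critPrice A i S dstar < max x (t S)) :
    (∀ d : Fin n → Finset α → ℝ, (∀ j, j ≠ i → IsSingleMindedDecl (d j)) →
        utility A t i (Function.update d i (singleMinded S (t S))) ≥
          utility A t i (Function.update d i (singleMinded S x))) ∧
      utility A t i (Function.update dstar i (singleMinded S (t S))) >
        utility A t i (Function.update dstar i (singleMinded S x)) := by
  classical
  -- dichotomy: agent i gets S or ∅
  have hdich : ∀ (d : Fin n → Finset α → ℝ),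
      (∀ j, j ≠ i → IsSingleMindedDecl (d j)) → ∀ y : ℝ, 0 ≤ y →
      A (Function.update d i (singleMinded S y)) i = S ∨
        A (Function.update d i (singleMinded S y)) i = ∅ := by
    intro d hd y hy
    choose Sv xv hxv hdv using fun j (h : j ≠ i) => hd j h
    have hprof : ∀ j, 0 ≤ (fun j => if h : j = i then y else xv j h) j ∧
        Function.update d i (singleMinded S y) j =
          singleMinded ((fun j => if h : j = i then S else Sv j h) j)
            ((fun j => if h : j = i then y else xv j h) j) := by
      intro j
      by_cases h : j = i
      · subst h; simp [hy]
      · simp [h, Function.update_of_ne h, hxv j h, hdv j h]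
    have h := hdec _ _ _ hprof i
    simpa using h
  -- upward closure of the winning set
  have hup : ∀ (d : Fin n → Finset α → ℝ) (y y' : ℝ), 0 ≤ y → y ≤ y' →
      A (Function.update d i (singleMinded S y)) i = S →
      A (Function.update d i (singleMinded S y')) i = S := by
    intro d y y' h0 hle hw
    exact hmono d i S S y y' h0 hle (subset_refl S) hw
  have hbdd : ∀ (d : Fin n → Finset α → ℝ), BddBelow
      {y : ℝ | 0 ≤ y ∧ A (Function.update d i (singleMinded S y)) i = S} :=
    fun d => ⟨0, fun w hw => hw.1⟩
  have hcrit : ∀ (d : Fin n → Finset α → ℝ) (e : Finset α → ℝ),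
      critPrice A i S (Function.update d i e) = critPrice A i S d := by
    intro d e
    unfold critPrice
    congr 1
    ext y
    simp only [Set.mem_setOf_eq, Function.update_idem]
  have hutil_win : ∀ (d : Fin n → Finset α → ℝ), S.Nonempty → ∀ y : ℝ,
      A (Function.update d i (singleMinded S y)) i = S →
      utility A t i (Function.update d i (singleMinded S y)) =
        t S - critPrice A i S d := by
    intro d hS y hw
    unfold utility
    rw [hw, if_neg (Finset.nonempty_iff_ne_empty.mp hS), hcrit]
  have hutil_lose : ∀ (d : Fin n → Finset α → ℝ) (y : ℝ),
      A (Function.update d i (singleMinded S y)) i = ∅ →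
      utility A t i (Function.update d i (singleMinded S y)) = 0 := by
    intro d y h
    unfold utility
    rw [h, if_pos rfl]
  have htS0 : 0 ≤ t S := ht.1 S
  constructor
  · -- weak domination
    intro d hd
    rcases eq_or_ne S ∅ with hSe | hSne'
    · have ha := (hdich d hd x hx).elim (fun h => h.trans hSe) id
      have hb := (hdich d hd (t S) htS0).elim (fun h => h.trans hSe) id
      rw [ge_iff_le, hutil_lose d x ha, hutil_lose d (t S) hb]
    · have hS : S.Nonempty := Finset.nonempty_iff_ne_empty.mpr hSne'
      rcases hdich d hd x hx with hwx | hlx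
      · rcases hdich d hd (t S) htS0 with hwt | hlt
        · rw [hutil_win d hS x hwx, hutil_win d hS (t S) hwt]
        · rw [ge_iff_le, hutil_win d hS x hwx, hutil_lose d (t S) hlt]
          have hle : t S ≤ critPrice A i S d := by
            unfold critPrice
            refine le_csInf ⟨x, hx, hwx⟩ ?_
            intro w hw
            by_contra hlt2
            push_neg at hlt2
            have hws := hup d w (t S) hw.1 hlt2.le hw.2
            rw [hws] at hlt
            exact hSne' hlt
          linarith
      · rw [ge_iff_le, hutil_lose d x hlx]
        rcases hdich d hd (t S) htS0 with hwt | hltt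
        · rw [hutil_win d hS (t S) hwt]
          have hle : critPrice A i S d ≤ t S := csInf_le (hbdd d) ⟨htS0, hwt⟩
          linarith
        · rw [hutil_lose d (t S) hltt]
  · -- strict domination at dstar
    obtain ⟨hb1, hb2⟩ := hbetween
    have hθpos : 0 < critPrice A i S dstar := lt_of_le_of_lt (le_min hx htS0) hb1
    have hSne : S.Nonempty := by
      rw [Finset.nonempty_iff_ne_empty]
      intro hSe
      have h0win : A (Function.update dstar i (singleMinded S 0)) i = S := by
        rcases hdich dstar hdstar 0 le_rfl with h | h
        · exact h
        · subst hSe; exact h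
      have hle0 : critPrice A i S dstar ≤ 0 := csInf_le (hbdd dstar) ⟨le_rfl, h0win⟩
      linarith
    have hWne : Set.Nonempty
        {y : ℝ | 0 ≤ y ∧ A (Function.update dstar i (singleMinded S y)) i = S} := by
      by_contra h
      rw [Set.not_nonempty_iff_eq_empty] at h
      have h2 : critPrice A i S dstar = 0 := by
        unfold critPrice
        rw [h, Real.sInf_empty]
      linarith
    rcases lt_or_gt_of_ne hne with hlt | hgt
    · -- x < t S
      have hxθ : x < critPrice A i S dstar := by rwa [min_eq_left hlt.le] at hb1
      have hθt : critPrice A i S dstar < t S := by rwa [max_eq_right hlt.le] at hb2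
      have hlx : A (Function.update dstar i (singleMinded S x)) i = ∅ := by
        rcases hdich dstar hdstar x hx with hw | h
        · exfalso
          have hle : critPrice A i S dstar ≤ x := csInf_le (hbdd dstar) ⟨hx, hw⟩
          linarith
        · exact h
      obtain ⟨w, hwmem, hwlt⟩ := exists_lt_of_csInf_lt hWne hθt
      have hwt : A (Function.update dstar i (singleMinded S (t S))) i = S :=
        hup dstar w (t S) hwmem.1 hwlt.le hwmem.2
      rw [hutil_win dstar hSne (t S) hwt, hutil_lose dstar x hlx]
      linarith
    · -- t S < x
      have htθ : t S < critPrice A i S dstar := by rwa [min_eq_right hgt.le] at hb1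
      have hθx : critPrice A i S dstar < x := by rwa [max_eq_left hgt.le] at hb2
      have hlts : A (Function.update dstar i (singleMinded S (t S))) i = ∅ := by
        rcases hdich dstar hdstar (t S) htS0 with hw | h
        · exfalso
          have hle : critPrice A i S dstar ≤ t S := csInf_le (hbdd dstar) ⟨htS0, hw⟩
          linarith
        · exact h
      obtain ⟨w, hwmem, hwlt⟩ := exists_lt_of_csInf_lt hWne hθx
      have hwx : A (Function.update dstar i (singleMinded S x)) i = S :=
        hup dstar w x hwmem.1 hwlt.le hwmem.2
      rw [hutil_lose dstar (t S) hlts, hutil_win dstar hSne x hwx]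
      linarith
end
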